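/- Consider an LSS with D modes. Suppose there exist symmetric positive definite matrices Q_q ∈ ℝ^{n_q×n_q} and constants M, μ > 0 such that A_qᵀ Q_q + Q_q A_q + M Q_q ≺ 0 for all modes q, and e^{−Mμ} K_{q1,q2}ᵀ Q_{q2} K_{q1,q2} ≺ Q_{q1} for all q1 ≠ q2 (≺ in the Loewner order). Then the LSS is uniformly exponentially stable with dwell time 2μ. -/

import Mathlib

open Matrix MeasureTheory

/-- A linear switched system (LSS) with `D` modes: mode `q` has state dimension `n q`,
dynamics matrices `A q`, `B q`, output matrix `C q`, and `K q1 q2` is the coupling matrix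
applied to the state when switching from mode `q1` to mode `q2`. -/
structure LSS (D m p : ℕ) where
  n : Fin D → ℕ
  A : (q : Fin D) → Matrix (Fin (n q)) (Fin (n q)) ℝ
  B : (q : Fin D) → Matrix (Fin (n q)) (Fin m) ℝ
  C : (q : Fin D) → Matrix (Fin p) (Fin (n q)) ℝ
  K : (q1 q2 : Fin D) → Matrix (Fin (n q2)) (Fin (n q1)) ℝ

/-- A switching scenario: a sequence of modes `σ 0, σ 1, …` with `σ i ≠ σ (i+1)` and
strictly increasing switching times `0 = T 0 < T 1 < ⋯`; the `(i+1)`-st dwell time is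
`T (i+1) - T i`. -/
structure SwitchingScenario (D : ℕ) where
  σ : ℕ → Fin D
  T : ℕ → ℝ
  hσ : ∀ i, σ i ≠ σ (i + 1)
  hT0 : T 0 = 0
  hTmono : StrictMono T

/-- `x i` is the piece of the trajectory on the interval `[T i, T (i+1)]` (the system is
in mode `σ i` there): it solves the mode-`σ i` linear ODE driven by `u` and satisfies the
jump conditions given by the coupling matrices. -/
def IsTrajectory {D m p : ℕ} (sys : LSS D m p) (S : SwitchingScenario D)
    (u : ℝ → Fin m → ℝ) (x : (i : ℕ) → ℝ → Fin (sys.n (S.σ i)) → ℝ) : Prop :=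
  (∀ i : ℕ, ∀ s ∈ Set.Icc (S.T i) (S.T (i + 1)),
      HasDerivAt (x i) ((sys.A (S.σ i)).mulVec (x i s) + (sys.B (S.σ i)).mulVec (u s)) s) ∧
  (∀ i : ℕ, x (i + 1) (S.T (i + 1)) =
      (sys.K (S.σ i) (S.σ (i + 1))).mulVec (x i (S.T (i + 1))))

/-- `y` is the output of the trajectory `x`: `y t = C_{σ i} (x i t)` for
`t ∈ (T i, T (i+1)]`. -/
def IsOutput {D m p : ℕ} (sys : LSS D m p) (S : SwitchingScenario D)
    (x : (i : ℕ) → ℝ → Fin (sys.n (S.σ i)) → ℝ) (y : ℝ → Fin p → ℝ) : Prop :=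
  ∀ i : ℕ, ∀ s ∈ Set.Ioc (S.T i) (S.T (i + 1)), y s = (sys.C (S.σ i)).mulVec (x i s)

/-- The LSS is uniformly exponentially stable with dwell time `μ`: there exist constants
`K, M' > 0` such that every zero-input trajectory along a switching scenario whose dwell
times are all `≥ μ` satisfies `‖x(t)‖₂ ≤ K e^{−M't} ‖x(0)‖₂` for all `t ≥ 0`. -/
def UnifExpStable {D m p : ℕ} (sys : LSS D m p) (μ : ℝ) : Prop :=
  ∃ Kc > (0:ℝ), ∃ M' > (0:ℝ),
    ∀ (S : SwitchingScenario D), (∀ i : ℕ, μ ≤ S.T (i + 1) - S.T i) →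
      ∀ (x : (i : ℕ) → ℝ → Fin (sys.n (S.σ i)) → ℝ),
        IsTrajectory sys S (fun _ _ => 0) x →
        (Real.sqrt (∑ j, (x 0 0 j) ^ 2) ≤
            Kc * Real.exp (-(M' * 0)) * Real.sqrt (∑ j, (x 0 0 j) ^ 2)) ∧
        ∀ i : ℕ, ∀ t ∈ Set.Ioc (S.T i) (S.T (i + 1)),
          Real.sqrt (∑ j, (x i t j) ^ 2) ≤
            Kc * Real.exp (-(M' * t)) * Real.sqrt (∑ j, (x 0 0 j) ^ 2)

/-!
Along a zero-input trajectory the piecewise quadratic Lyapunov function `V = xᵀ Q_{σ i} x`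
decays like `e^{-Mt}` while the system stays in one mode (Gronwall), and the coupling condition
lets it grow by at most the factor `e^{Mμ}` at a switch. With dwell times at least `2μ`, half of
the decay over each dwell interval pays for the following jump, so `V` decays like `e^{-Mt/2}`.
Comparing `V` with `‖x‖²` uniformly over the finitely many modes then gives
`‖x(t)‖ ≤ K e^{-Mt/4} ‖x(0)‖`.
-/

section Calculus

variable {n : Type*} [Fintype n] {f g : ℝ → n → ℝ} {f' g' : n → ℝ} {t : ℝ}

theorem HasDerivAt.dotProduct (hf : HasDerivAt f f' t) (hg : HasDerivAt g g' t) :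
    HasDerivAt (fun s => f s ⬝ᵥ g s) (f' ⬝ᵥ g t + f t ⬝ᵥ g') t := by
  have := HasDerivAt.fun_sum (u := Finset.univ) fun j _ =>
    (hasDerivAt_pi.mp hf j).mul (hasDerivAt_pi.mp hg j)
  rw [_root_.dotProduct, _root_.dotProduct, ← Finset.sum_add_distrib]
  exact this

theorem HasDerivAt.matrix_mulVec {m : Type*} [Fintype m] (A : Matrix m n ℝ)
    (hf : HasDerivAt f f' t) : HasDerivAt (fun s => A *ᵥ f s) (A *ᵥ f') t :=
  (Matrix.mulVecLin A).toContinuousLinearMap.hasFDerivAt.comp_hasDerivAt t hf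

end Calculus

theorem le_mul_exp_of_hasDerivAt_le_mul {V V' : ℝ → ℝ} {a b k : ℝ}
    (hV : ∀ s ∈ Set.Icc a b, HasDerivAt V (V' s) s) (hV' : ∀ s ∈ Set.Icc a b, V' s ≤ k * V s) :
    ∀ t ∈ Set.Icc a b, V t ≤ V a * Real.exp (k * (t - a)) := by
  intro t ht
  have := le_gronwallBound_of_liminf_deriv_right_le (ε := 0)
    (fun s hs => (hV s hs).continuousAt.continuousWithinAt)
    (fun s hs r hr =>
      (hV s (Set.Ico_subset_Icc_self hs)).hasDerivWithinAt.liminf_right_slope_le hr)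
    le_rfl (fun s hs => by simpa using hV' s (Set.Ico_subset_Icc_self hs)) t ht
  rwa [gronwallBound_ε0] at this

namespace Matrix

variable {n : Type*} [Fintype n]

theorem smul_dotProduct_mulVec_smul (Q : Matrix n n ℝ) (r : ℝ) (v : n → ℝ) :
    (r • v) ⬝ᵥ Q *ᵥ (r • v) = r ^ 2 * (v ⬝ᵥ Q *ᵥ v) := by
  simp only [mulVec_smul, smul_dotProduct, dotProduct_smul, smul_eq_mul]
  ring

/-- On the compact unit sphere the quadratic form of `P` is bounded below by a positive constant
and that of `Q` is bounded above; homogeneity extends the comparison to all vectors. -/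
theorem PosDef.exists_dotProduct_mulVec_le_mul {P : Matrix n n ℝ} (hP : P.PosDef)
    (Q : Matrix n n ℝ) : ∃ c, ∀ v : n → ℝ, v ⬝ᵥ Q *ᵥ v ≤ c * (v ⬝ᵥ P *ᵥ v) := by
  have hcont : ∀ A : Matrix n n ℝ, Continuous fun v : n → ℝ => v ⬝ᵥ A *ᵥ v := fun A =>
    continuous_id.dotProduct (continuous_const.matrix_mulVec continuous_id)
  obtain ⟨a, ha, hPa⟩ := (isCompact_sphere (0 : n → ℝ) 1).exists_forall_le' (a := 0)
    (hcont P).continuousOn fun v hv => by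
      simpa using hP.dotProduct_mulVec_pos (ne_zero_of_mem_unit_sphere ⟨v, hv⟩)
  obtain ⟨C, hQC⟩ := (isCompact_sphere (0 : n → ℝ) 1).bddAbove_image (hcont Q).continuousOn
  refine ⟨max C 0 / a, fun v => ?_⟩
  rcases eq_or_ne v 0 with rfl | hv
  · simp
  obtain ⟨r, u, hu, rfl⟩ : ∃ (r : ℝ) (u : n → ℝ), u ∈ Metric.sphere 0 1 ∧ v = r • u :=
    ⟨‖v‖, ‖v‖⁻¹ • v, by simp [norm_smul, hv], by simp [smul_smul, hv]⟩
  rw [smul_dotProduct_mulVec_smul, smul_dotProduct_mulVec_smul]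
  calc r ^ 2 * (u ⬝ᵥ Q *ᵥ u)
      ≤ r ^ 2 * max C 0 := by gcongr; exact (hQC ⟨u, hu, rfl⟩).trans (le_max_left _ _)
    _ = max C 0 / a * (r ^ 2 * a) := by field_simp
    _ ≤ max C 0 / a * (r ^ 2 * (u ⬝ᵥ P *ᵥ u)) := by gcongr; exact hPa u hu

theorem PosDef.exists_pos_forall_dotProduct_mulVec_le_mul {ι : Type*} [Finite ι]
    {d : ι → Type*} [∀ i, Fintype (d i)] {P : ∀ i, Matrix (d i) (d i) ℝ}
    (hP : ∀ i, (P i).PosDef) (Q : ∀ i, Matrix (d i) (d i) ℝ) :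
    ∃ c > 0, ∀ i (v : d i → ℝ), v ⬝ᵥ Q i *ᵥ v ≤ c * (v ⬝ᵥ P i *ᵥ v) := by
  choose c hc using fun i => (hP i).exists_dotProduct_mulVec_le_mul (Q i)
  obtain ⟨C, hC⟩ := Finite.bddAbove_range c
  refine ⟨max C 1, by positivity, fun i v => (hc i v).trans ?_⟩
  have hPv : 0 ≤ v ⬝ᵥ P i *ᵥ v := by simpa using (hP i).posSemidef.dotProduct_mulVec_nonneg v
  gcongr
  exact (hC ⟨i, rfl⟩).trans (le_max_left _ _)

theorem lyapunov_derivative_le {A Q : Matrix n n ℝ} {M : ℝ}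
    (h : (-(Aᵀ * Q + Q * A + M • Q)).PosSemidef) (v : n → ℝ) :
    (A *ᵥ v) ⬝ᵥ Q *ᵥ v + v ⬝ᵥ Q *ᵥ (A *ᵥ v) ≤ -M * (v ⬝ᵥ Q *ᵥ v) := by
  have h0 := h.dotProduct_mulVec_nonneg v
  simp only [star_trivial, neg_mulVec, dotProduct_neg, add_mulVec, dotProduct_add, smul_mulVec,
    dotProduct_smul, smul_eq_mul, ← mulVec_mulVec, dotProduct_mulVec v Aᵀ, vecMul_transpose] at h0
  linarith

theorem dotProduct_mulVec_le_exp_of_lyapunov {A Q : Matrix n n ℝ} {M a b : ℝ}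
    (h : (-(Aᵀ * Q + Q * A + M • Q)).PosSemidef) {x : ℝ → n → ℝ}
    (hx : ∀ s ∈ Set.Icc a b, HasDerivAt x (A *ᵥ x s) s) :
    ∀ t ∈ Set.Icc a b, x t ⬝ᵥ Q *ᵥ x t ≤ (x a ⬝ᵥ Q *ᵥ x a) * Real.exp (-M * (t - a)) :=
  le_mul_exp_of_hasDerivAt_le_mul (fun s hs => (hx s hs).dotProduct ((hx s hs).matrix_mulVec Q))
    fun s _ => lyapunov_derivative_le h (x s)

theorem mulVec_dotProduct_mulVec_le_of_posSemidef {m : Type*} [Fintype m]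
    {K : Matrix m n ℝ} {P : Matrix n n ℝ} {Q : Matrix m m ℝ} {c : ℝ} (hc : 0 < c)
    (h : (P - c • (Kᵀ * Q * K)).PosSemidef) (v : n → ℝ) :
    (K *ᵥ v) ⬝ᵥ Q *ᵥ (K *ᵥ v) ≤ c⁻¹ * (v ⬝ᵥ P *ᵥ v) := by
  have h0 := h.dotProduct_mulVec_nonneg v
  simp only [star_trivial, sub_mulVec, dotProduct_sub, smul_mulVec, dotProduct_smul, smul_eq_mul,
    ← mulVec_mulVec, dotProduct_mulVec v Kᵀ, vecMul_transpose] at h0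
  rw [le_inv_mul_iff₀ hc]
  linarith

end Matrix

namespace IsTrajectory

variable {D m p : ℕ} {sys : LSS D m p} {S : SwitchingScenario D}
  {x : (i : ℕ) → ℝ → Fin (sys.n (S.σ i)) → ℝ}
  {Q : (q : Fin D) → Matrix (Fin (sys.n q)) (Fin (sys.n q)) ℝ} {Mc μ : ℝ}

theorem hasDerivAt_of_zero_input (hx : IsTrajectory sys S (fun _ _ => 0) x) {i : ℕ} {s : ℝ}
    (hs : s ∈ Set.Icc (S.T i) (S.T (i + 1))) : HasDerivAt (x i) (sys.A (S.σ i) *ᵥ x i s) s := by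
  simpa [← Pi.zero_def] using hx.1 i s hs

theorem lyapunov_le_at_switch (hx : IsTrajectory sys S (fun _ _ => 0) x)
    (hQ : ∀ q, (Q q).PosSemidef) (hMc : 0 ≤ Mc)
    (hLyap : ∀ q, (-((sys.A q)ᵀ * Q q + Q q * sys.A q + Mc • Q q)).PosSemidef)
    (hK : ∀ q1 q2, q1 ≠ q2 →
      (Q q1 - Real.exp (-(Mc * μ)) • ((sys.K q1 q2)ᵀ * Q q2 * sys.K q1 q2)).PosSemidef)
    (hdwell : ∀ i, 2 * μ ≤ S.T (i + 1) - S.T i) (i : ℕ) :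
    x i (S.T i) ⬝ᵥ Q (S.σ i) *ᵥ x i (S.T i) ≤
      (x 0 0 ⬝ᵥ Q (S.σ 0) *ᵥ x 0 0) * Real.exp (-(Mc / 2) * S.T i) := by
  induction i with
  | zero => simp [S.hT0]
  | succ i ih =>
    have hV0 : 0 ≤ x 0 0 ⬝ᵥ Q (S.σ 0) *ᵥ x 0 0 := by
      simpa using (hQ (S.σ 0)).dotProduct_mulVec_nonneg (x 0 0)
    have hT : S.T i ≤ S.T (i + 1) := (S.hTmono i.lt_succ_self).le
    have hflow := Matrix.dotProduct_mulVec_le_exp_of_lyapunov (hLyap (S.σ i))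
      (fun s hs => hx.hasDerivAt_of_zero_input hs) (S.T (i + 1)) ⟨hT, le_rfl⟩
    have hjump := Matrix.mulVec_dotProduct_mulVec_le_of_posSemidef (Real.exp_pos _)
      (hK _ _ (S.hσ i)) (x i (S.T (i + 1)))
    -- a dwell time of at least `2μ` lets the flow absorb the gain `e^{Mμ}` of the jump
    have hexp : (Real.exp (-(Mc * μ)))⁻¹ * Real.exp (-Mc * (S.T (i + 1) - S.T i)) *
        Real.exp (-(Mc / 2) * S.T i) ≤ Real.exp (-(Mc / 2) * S.T (i + 1)) := by
      rw [← Real.exp_neg, ← Real.exp_add, ← Real.exp_add, Real.exp_le_exp]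
      nlinarith [hdwell i]
    rw [hx.2 i]
    calc _ ≤ (Real.exp (-(Mc * μ)))⁻¹ * (x i (S.T (i + 1)) ⬝ᵥ Q (S.σ i) *ᵥ x i (S.T (i + 1))) :=
          hjump
      _ ≤ (Real.exp (-(Mc * μ)))⁻¹ * ((x 0 0 ⬝ᵥ Q (S.σ 0) *ᵥ x 0 0) *
            Real.exp (-(Mc / 2) * S.T i) * Real.exp (-Mc * (S.T (i + 1) - S.T i))) := by
          gcongr; exact hflow.trans (by gcongr)
      _ = (x 0 0 ⬝ᵥ Q (S.σ 0) *ᵥ x 0 0) * ((Real.exp (-(Mc * μ)))⁻¹ *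
            Real.exp (-Mc * (S.T (i + 1) - S.T i)) * Real.exp (-(Mc / 2) * S.T i)) := by ring
      _ ≤ _ := by gcongr

theorem lyapunov_le (hx : IsTrajectory sys S (fun _ _ => 0) x)
    (hQ : ∀ q, (Q q).PosSemidef) (hMc : 0 ≤ Mc)
    (hLyap : ∀ q, (-((sys.A q)ᵀ * Q q + Q q * sys.A q + Mc • Q q)).PosSemidef)
    (hK : ∀ q1 q2, q1 ≠ q2 →
      (Q q1 - Real.exp (-(Mc * μ)) • ((sys.K q1 q2)ᵀ * Q q2 * sys.K q1 q2)).PosSemidef)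
    (hdwell : ∀ i, 2 * μ ≤ S.T (i + 1) - S.T i) (i : ℕ) {t : ℝ}
    (ht : t ∈ Set.Icc (S.T i) (S.T (i + 1))) :
    x i t ⬝ᵥ Q (S.σ i) *ᵥ x i t ≤ (x 0 0 ⬝ᵥ Q (S.σ 0) *ᵥ x 0 0) * Real.exp (-(Mc / 2) * t) := by
  have hflow := Matrix.dotProduct_mulVec_le_exp_of_lyapunov (hLyap (S.σ i))
    (fun s hs => hx.hasDerivAt_of_zero_input hs) t ht
  have hswitch := hx.lyapunov_le_at_switch hQ hMc hLyap hK hdwell i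
  have hexp : Real.exp (-(Mc / 2) * S.T i) * Real.exp (-Mc * (t - S.T i)) ≤
      Real.exp (-(Mc / 2) * t) := by
    rw [← Real.exp_add, Real.exp_le_exp]
    nlinarith [ht.1]
  calc _ ≤ (x 0 0 ⬝ᵥ Q (S.σ 0) *ᵥ x 0 0) * Real.exp (-(Mc / 2) * S.T i) *
        Real.exp (-Mc * (t - S.T i)) := hflow.trans (by gcongr)
    _ ≤ _ := by
        rw [mul_assoc]
        gcongr
        simpa using (hQ (S.σ 0)).dotProduct_mulVec_nonneg (x 0 0)

end IsTrajectory

theorem sqrt_sum_sq_le_sqrt_mul {n n' : Type*} [Fintype n] [Fintype n'] {v : n → ℝ}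
    {w : n' → ℝ} {a : ℝ} (h : v ⬝ᵥ v ≤ a * (w ⬝ᵥ w)) :
    √(∑ j, v j ^ 2) ≤ √a * √(∑ j, w j ^ 2) := by
  rw [← Real.sqrt_mul' a (by positivity)]
  exact Real.sqrt_le_sqrt (by simpa only [dotProduct, sq] using h)

theorem stmt_11 {D m p : ℕ} (sys : LSS D m p)
    (Q : (q : Fin D) → Matrix (Fin (sys.n q)) (Fin (sys.n q)) ℝ)
    (hQ : ∀ q, (Q q).PosDef)
    (Mc μ : ℝ) (hMc : 0 < Mc)
    (hLyap : ∀ q, (-((sys.A q)ᵀ * Q q + Q q * sys.A q + Mc • Q q)).PosDef)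
    (hK : ∀ q1 q2, q1 ≠ q2 →
      (Q q1 - Real.exp (-(Mc * μ)) • ((sys.K q1 q2)ᵀ * Q q2 * sys.K q1 q2)).PosDef) :
    UnifExpStable sys (2 * μ) := by
  obtain ⟨α, hα, hlower⟩ := Matrix.PosDef.exists_pos_forall_dotProduct_mulVec_le_mul hQ fun _ => 1
  obtain ⟨β, hβ, hupper⟩ :=
    Matrix.PosDef.exists_pos_forall_dotProduct_mulVec_le_mul (fun _ => Matrix.PosDef.one) Q
  refine ⟨√(α * β), by positivity, Mc / 4, by positivity, fun S hdwell x hx => ?_⟩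
  have hbound : ∀ i, ∀ t ∈ Set.Icc (S.T i) (S.T (i + 1)),
      √(∑ j, x i t j ^ 2) ≤ √(α * β) * Real.exp (-(Mc / 4 * t)) * √(∑ j, x 0 0 j ^ 2) := by
    intro i t ht
    have hV := hx.lyapunov_le (fun q => (hQ q).posSemidef) hMc.le (fun q => (hLyap q).posSemidef)
      (fun q1 q2 hq => (hK q1 q2 hq).posSemidef) hdwell i ht
    calc √(∑ j, x i t j ^ 2) ≤ √(α * β * Real.exp (-(Mc / 2) * t)) * √(∑ j, x 0 0 j ^ 2) := by
          apply sqrt_sum_sq_le_sqrt_mul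
          calc _ ≤ α * (x i t ⬝ᵥ Q (S.σ i) *ᵥ x i t) := by simpa using hlower (S.σ i) (x i t)
            _ ≤ α * ((x 0 0 ⬝ᵥ Q (S.σ 0) *ᵥ x 0 0) * Real.exp (-(Mc / 2) * t)) := by gcongr
            _ ≤ α * (β * (x 0 0 ⬝ᵥ x 0 0) * Real.exp (-(Mc / 2) * t)) := by
                gcongr; simpa using hupper (S.σ 0) (x 0 0)
            _ = _ := by ring
      _ = _ := by rw [Real.sqrt_mul (by positivity), ← Real.exp_half]; ring_nf
  have hT1 : S.T 0 ≤ S.T 1 := (S.hTmono zero_lt_one).le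
  exact ⟨by simpa [S.hT0] using hbound 0 0 ⟨S.hT0.le, S.hT0 ▸ hT1⟩,
    fun i t ht => hbound i t (Set.Ioc_subset_Icc_self ht)⟩
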